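/- arXiv:1704.04636 — 4 statements merged into one kernel-verified Lean document; each statement's English description precedes it below -/
import Mathlib

section
/- Let A be a set, f : A → ℝ a finitely supported function, and G an amenable group acting transitively on A. Then for every ε > 0 there exists a finitely supported probability measure μ on G such that ‖μ * f‖₁ ≤ ε + |Σ_{a∈A} f(a)|, where (μ * f)(x) = Σ_{g∈G} μ(g) f(g⁻¹·x). -/
/-!
Fix `a₀ : A` and write each `a = t a • a₀`. Amenability gives (Reiter's condition, via the
normalized indicator of a Følner set) a probability measure `ν` on `G` with `‖t_a⁻¹ ν - ν‖₁ ≤ δ`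
(left translate of `ν`) for the finitely many `a` in the support of `f`. For `μ(g) = ν(g⁻¹)` one has
`μ * f = π (∑ₐ f(a) • t_a⁻¹ ν)`, where `π` pushes forward along `k ↦ k⁻¹ • a₀` and does not
increase the `ℓ¹`-norm. Replacing every `t_a⁻¹ ν` by `ν` leaves `(∑ₐ f(a)) • π ν`, of norm at most
`|∑ₐ f(a)|`, at a cost of at most `δ ‖f‖₁`.
-/

noncomputable section

open scoped symmDiff

open Classical in
/-- A group is amenable if it satisfies the Følner condition: finite subsets that are almost
invariant under any finite set of left translations. -/
def Amenable (G : Type*) [Group G] : Prop :=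
  ∀ ε : ℝ, 0 < ε → ∀ S : Finset G, ∃ F : Finset G, F.Nonempty ∧
    ∀ s ∈ S, (((F.image fun x => s * x) ∆ F).card : ℝ) ≤ ε * F.card

variable {G : Type*} [Group G] {A : Type*} [MulAction G A]

/-- ℓ¹-norm of a finitely supported real function. -/
def l1norm {α : Type*} (f : α →₀ ℝ) : ℝ := ∑ a ∈ f.support, |f a|

/-- The diffusion `(μ * f)(x) = Σ_g μ(g) f(g⁻¹ · x)` of a finitely supported function `f` on a
`G`-set `A` by a finitely supported measure `μ` on `G`. -/
def diffuse (μ : G →₀ ℝ) (f : A →₀ ℝ) : A →₀ ℝ :=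
  μ.sum fun g m => m • Finsupp.mapDomain (fun a => g • a) f

section L1

variable {α β : Type*}

lemma l1norm_eq_sum_of_support_subset (f : α →₀ ℝ) {T : Finset α} (h : f.support ⊆ T) :
    l1norm f = ∑ a ∈ T, |f a| :=
  Finset.sum_subset h fun a _ ha => by simp [Finsupp.notMem_support_iff.mp ha]

lemma l1norm_nonneg (f : α →₀ ℝ) : 0 ≤ l1norm f :=
  Finset.sum_nonneg fun _ _ => abs_nonneg _

lemma l1norm_add_le (f g : α →₀ ℝ) : l1norm (f + g) ≤ l1norm f + l1norm g := by
  classical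
  rw [l1norm_eq_sum_of_support_subset (f + g) Finsupp.support_add,
    l1norm_eq_sum_of_support_subset f Finset.subset_union_left,
    l1norm_eq_sum_of_support_subset g Finset.subset_union_right, ← Finset.sum_add_distrib]
  exact Finset.sum_le_sum fun a _ => abs_add_le (f a) (g a)

lemma l1norm_smul (c : ℝ) (f : α →₀ ℝ) : l1norm (c • f) = |c| * l1norm f := by
  rw [l1norm_eq_sum_of_support_subset (c • f) Finsupp.support_smul, l1norm, Finset.mul_sum]
  simp only [Finsupp.smul_apply, smul_eq_mul, abs_mul]

lemma l1norm_neg (f : α →₀ ℝ) : l1norm (-f) = l1norm f := by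
  simpa using l1norm_smul (-1) f

lemma l1norm_sub_le (f g : α →₀ ℝ) : l1norm (f - g) ≤ l1norm f + l1norm g := by
  simpa [sub_eq_add_neg, l1norm_neg] using l1norm_add_le f (-g)

lemma l1norm_sum_le {ι : Type*} (T : Finset ι) (φ : ι → α →₀ ℝ) :
    l1norm (∑ i ∈ T, φ i) ≤ ∑ i ∈ T, l1norm (φ i) :=
  Finset.le_sum_of_subadditive l1norm (by simp [l1norm]) l1norm_add_le T φ

lemma l1norm_single (a : α) (b : ℝ) : l1norm (Finsupp.single a b) = |b| := by
  rw [l1norm_eq_sum_of_support_subset _ Finsupp.support_single_subset]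
  simp

lemma l1norm_mapDomain_le (h : α → β) (f : α →₀ ℝ) :
    l1norm (f.mapDomain h) ≤ l1norm f := by
  refine (l1norm_sum_le _ _).trans_eq ?_
  simp only [l1norm_single]
  rfl

end L1

section Indicator

open Finset

variable {α : Type*}

def indicatorFinsupp (U : Finset α) : α →₀ ℝ := ∑ x ∈ U, Finsupp.single x 1

lemma indicatorFinsupp_apply [DecidableEq α] (U : Finset α) (x : α) :
    indicatorFinsupp U x = if x ∈ U then 1 else 0 := by
  simp [indicatorFinsupp, Finsupp.finsetSum_apply, Finsupp.single_apply]

lemma support_indicatorFinsupp_subset (U : Finset α) : (indicatorFinsupp U).support ⊆ U := by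
  classical
  intro x hx
  by_contra h
  simp [indicatorFinsupp_apply, h] at hx

lemma l1norm_indicatorFinsupp_le (U : Finset α) : l1norm (indicatorFinsupp U) ≤ #U :=
  (l1norm_sum_le _ _).trans (by simp [l1norm_single])

lemma l1norm_indicatorFinsupp_sub_le [DecidableEq α] (U V : Finset α) :
    l1norm (indicatorFinsupp U - indicatorFinsupp V) ≤ #(U ∆ V) := by
  rw [indicatorFinsupp, indicatorFinsupp, ← sum_sdiff_sub_sum_sdiff, symmDiff_def, sup_eq_union,
    card_union_of_disjoint disjoint_sdiff_sdiff, Nat.cast_add]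
  exact (l1norm_sub_le _ _).trans
    (add_le_add (l1norm_indicatorFinsupp_le _) (l1norm_indicatorFinsupp_le _))

lemma mapDomain_indicatorFinsupp {β : Type*} [DecidableEq β] {h : α → β} (hh : h.Injective)
    (U : Finset α) : (indicatorFinsupp U).mapDomain h = indicatorFinsupp (U.image h) := by
  simp [indicatorFinsupp, Finsupp.mapDomain_finsetSum, sum_image hh.injOn]

end Indicator

theorem Amenable.exists_prob_almost_invariant (hG : Amenable G) {δ : ℝ} (hδ : 0 < δ)
    (S : Finset G) : ∃ ν : G →₀ ℝ, (∀ g, 0 ≤ ν g) ∧ ∑ g ∈ ν.support, ν g = 1 ∧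
      ∀ s ∈ S, l1norm (ν.mapDomain (s * ·) - ν) ≤ δ := by
  classical
  obtain ⟨F, hF, hFolner⟩ := hG δ hδ S
  have hn : (0 : ℝ) < F.card := by exact_mod_cast hF.card_pos
  refine ⟨(F.card : ℝ)⁻¹ • indicatorFinsupp F, fun g => ?_, ?_, fun s hs => ?_⟩
  · simp only [Finsupp.smul_apply, indicatorFinsupp_apply, smul_eq_mul]
    split_ifs <;> positivity
  · have hsupp := (Finsupp.support_smul (b := (F.card : ℝ)⁻¹)).trans
      (support_indicatorFinsupp_subset F)
    rw [Finset.sum_subset hsupp fun g _ hg => Finsupp.notMem_support_iff.mp hg]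
    simp [indicatorFinsupp_apply, Finset.sum_ite_mem, hn.ne']
  · rw [Finsupp.mapDomain_smul, mapDomain_indicatorFinsupp (mul_right_injective s), ← smul_sub,
      l1norm_smul, abs_inv, Nat.abs_cast, inv_mul_le_iff₀ hn, mul_comm]
    exact (l1norm_indicatorFinsupp_sub_le _ _).trans (hFolner s hs)

lemma diffuse_eq_sum_smul_mapDomain (μ : G →₀ ℝ) (f : A →₀ ℝ) :
    diffuse μ f = ∑ a ∈ f.support, f a • μ.mapDomain (· • a) := by
  simp only [diffuse, Finsupp.mapDomain, Finsupp.sum, Finset.smul_sum, Finsupp.smul_single,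
    smul_eq_mul]
  rw [Finset.sum_comm]
  simp only [mul_comm]

lemma l1norm_diffuse_le {a₀ : A} {t : A → G} (ht : ∀ a, t a • a₀ = a) (ν : G →₀ ℝ)
    (f : A →₀ ℝ) {δ : ℝ} (hν : ∀ a ∈ f.support, l1norm (ν.mapDomain ((t a)⁻¹ * ·) - ν) ≤ δ) :
    l1norm (diffuse (ν.equivMapDomain (Equiv.inv G)) f) ≤
      |∑ a ∈ f.support, f a| * l1norm ν + l1norm f * δ := by
  set π := Finsupp.lmapDomain ℝ ℝ fun k : G => k⁻¹ • a₀
  have hmap (a : A) : (ν.equivMapDomain (Equiv.inv G)).mapDomain (· • a) =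
      π (ν.mapDomain ((t a)⁻¹ * ·)) := by
    rw [Finsupp.equivMapDomain_eq_mapDomain, ← Finsupp.mapDomain_comp, Finsupp.lmapDomain_apply,
      ← Finsupp.mapDomain_comp]
    congr 1
    funext g
    simp [mul_smul, ht]
  have hsplit : diffuse (ν.equivMapDomain (Equiv.inv G)) f = (∑ a ∈ f.support, f a) • π ν +
      ∑ a ∈ f.support, f a • π (ν.mapDomain ((t a)⁻¹ * ·) - ν) := by
    simp only [diffuse_eq_sum_smul_mapDomain, hmap, map_sub, smul_sub, Finset.sum_sub_distrib,
      Finset.sum_smul]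
    abel
  rw [hsplit]
  calc _ ≤ l1norm ((∑ a ∈ f.support, f a) • π ν) +
        ∑ a ∈ f.support, l1norm (f a • π (ν.mapDomain ((t a)⁻¹ * ·) - ν)) :=
        (l1norm_add_le _ _).trans (add_le_add_right (l1norm_sum_le _ _) _)
    _ ≤ |∑ a ∈ f.support, f a| * l1norm ν + ∑ a ∈ f.support, |f a| * δ := by
        simp only [l1norm_smul]
        gcongr with a ha
        · exact l1norm_mapDomain_le _ _
        · exact (l1norm_mapDomain_le _ _).trans (hν a ha)
    _ = |∑ a ∈ f.support, f a| * l1norm ν + l1norm f * δ := by rw [← Finset.sum_mul]; rfl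

/-- **Gromov's diffusion lemma.** If an amenable group `G` acts transitively on a
set `A` and `f : A → ℝ` is finitely supported, then for every `ε > 0` there is a finitely
supported probability measure `μ` on `G` with `‖μ * f‖₁ ≤ ε + |Σ_a f(a)|`. -/
theorem diffusion_of_amenable_transitive (hG : Amenable G)
    (htrans : MulAction.IsPretransitive G A) (f : A →₀ ℝ) (ε : ℝ) (hε : 0 < ε) :
    ∃ μ : G →₀ ℝ, (∀ g, 0 ≤ μ g) ∧ (∑ g ∈ μ.support, μ g = 1) ∧
      l1norm (diffuse μ f) ≤ ε + |∑ a ∈ f.support, f a| := by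
  classical
  rcases isEmpty_or_nonempty A with hA | ⟨⟨a₀⟩⟩
  · obtain ⟨ν, hν0, hν1, -⟩ := hG.exists_prob_almost_invariant one_pos ∅
    refine ⟨ν, hν0, hν1, ?_⟩
    simp only [l1norm, Finset.eq_empty_of_isEmpty, Finset.sum_empty]
    positivity
  choose t ht using htrans.exists_smul_eq a₀
  have hM : 0 < l1norm f + 1 := by linarith [l1norm_nonneg f]
  obtain ⟨ν, hν0, hν1, hν⟩ := hG.exists_prob_almost_invariant (div_pos hε hM)
    (f.support.image fun a => (t a)⁻¹)
  have hν_norm : l1norm ν = 1 := (Finset.sum_congr rfl fun g _ => abs_of_nonneg (hν0 g)).trans hν1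
  refine ⟨ν.equivMapDomain (Equiv.inv G), fun g => hν0 _,
    (Finsupp.sum_equivMapDomain _ ν fun _ m => m).trans hν1, ?_⟩
  calc _ ≤ |∑ a ∈ f.support, f a| * l1norm ν + l1norm f * (ε / (l1norm f + 1)) :=
        l1norm_diffuse_le ht ν f fun a ha => hν _ (Finset.mem_image_of_mem _ ha)
    _ ≤ ε + |∑ a ∈ f.support, f a| := by
        have hδ : l1norm f * (ε / (l1norm f + 1)) ≤ ε := by
          rw [mul_div_left_comm]
          exact mul_le_of_le_one_right hε.le ((div_le_one hM).2 (lt_add_one _).le)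
        rw [hν_norm]
        linarith
end
end

section
/- Let A be a set, f : A → ℝ a finitely supported function, G an amenable group acting on A, and let A_1, ..., A_N ⊂ A be the orbits of the elements of supp(f). Then for every ε > 0 there exists a finitely supported probability measure μ on G such that ‖μ * f‖₁ ≤ ε + Σ_{i=1}^N |Σ_{a∈A_i} f(a)|. (This follows, given the transitive-orbit case, by composing measures μ = μ_N * ... * μ_1 chosen successively for each orbit.) -/
noncomputable section

open scoped symmDiff

variable {G : Type*} [Group G] {A : Type*} [MulAction G A]

namespace DiffProof

variable {α β ι : Type*}

lemma l1norm_eq_sum (f : α →₀ ℝ) (s : Finset α) (hs : f.support ⊆ s) :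
    l1norm f = ∑ a ∈ s, |f a| :=
  Finset.sum_subset hs (fun x _ hx => by simp [Finsupp.notMem_support_iff.mp hx])

lemma l1norm_nonneg (f : α →₀ ℝ) : 0 ≤ l1norm f :=
  Finset.sum_nonneg fun _ _ => abs_nonneg _

lemma l1norm_zero : l1norm (0 : α →₀ ℝ) = 0 := by simp [l1norm]

lemma l1norm_add_le (f g : α →₀ ℝ) : l1norm (f + g) ≤ l1norm f + l1norm g := by
  classical
  rw [l1norm_eq_sum (f+g) (f.support ∪ g.support) (Finsupp.support_add),
      l1norm_eq_sum f (f.support ∪ g.support) Finset.subset_union_left,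
      l1norm_eq_sum g (f.support ∪ g.support) Finset.subset_union_right,
      ← Finset.sum_add_distrib]
  exact Finset.sum_le_sum fun a _ => by simpa using abs_add_le (f a) (g a)

lemma l1norm_sum_le (s : Finset ι) (h : ι → α →₀ ℝ) :
    l1norm (∑ i ∈ s, h i) ≤ ∑ i ∈ s, l1norm (h i) := by
  classical
  induction s using Finset.cons_induction with
  | empty => simp [l1norm_zero]
  | cons i s hi ih =>
      rw [Finset.sum_cons, Finset.sum_cons]
      exact (l1norm_add_le _ _).trans (by linarith)

lemma l1norm_smul (c : ℝ) (f : α →₀ ℝ) : l1norm (c • f) = |c| * l1norm f := by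
  rw [l1norm_eq_sum (c • f) f.support (Finsupp.support_smul), l1norm, Finset.mul_sum]
  exact Finset.sum_congr rfl fun a _ => by simp [abs_mul]

lemma l1norm_single (a : α) (c : ℝ) : l1norm (Finsupp.single a c) = |c| := by
  classical
  rcases eq_or_ne c 0 with h | h
  · simp [h, l1norm_zero]
  · simp [l1norm, Finsupp.support_single_ne_zero a h]

lemma mapDomain_eq_sum (φ : α → β) (f : α →₀ ℝ) :
    Finsupp.mapDomain φ f = ∑ a ∈ f.support, Finsupp.single (φ a) (f a) := rfl

lemma l1norm_mapDomain_le (φ : α → β) (f : α →₀ ℝ) :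
    l1norm (Finsupp.mapDomain φ f) ≤ l1norm f := by
  rw [mapDomain_eq_sum]
  refine (l1norm_sum_le _ _).trans ?_
  rw [l1norm]
  exact Finset.sum_le_sum fun a _ => le_of_eq (l1norm_single _ _)

/-- indicator function of a finset as a finsupp -/
def u (X : Finset α) : α →₀ ℝ := ∑ x ∈ X, Finsupp.single x 1

lemma u_apply [DecidableEq α] (X : Finset α) (a : α) :
    u X a = if a ∈ X then 1 else 0 := by
  classical
  rw [u, Finset.sum_apply']
  simp [Finsupp.single_apply, Finset.sum_ite_eq X a (fun _ => (1:ℝ))]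

lemma mapDomain_u [DecidableEq β] (ι : α → β) (hι : Function.Injective ι) (X : Finset α) :
    Finsupp.mapDomain ι (u X) = u (X.image ι) := by
  rw [u, Finsupp.mapDomain_finset_sum, u, Finset.sum_image (fun x _ y _ h => hι h)]
  simp [Finsupp.mapDomain_single]

lemma l1norm_u (X : Finset α) : l1norm (u X) = X.card := by
  classical
  have hs : (u X).support ⊆ X := fun a ha => by
    by_contra h
    exact Finsupp.mem_support_iff.mp ha (by simp [u_apply, h])
  rw [l1norm_eq_sum _ X hs,
    Finset.sum_congr rfl (fun a ha => show |u X a| = 1 by simp [u_apply, ha])]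
  simp

lemma l1norm_u_sub [DecidableEq α] (X Y : Finset α) :
    l1norm (u X - u Y) = ((X ∆ Y).card : ℝ) := by
  classical
  have hs : (u X - u Y).support ⊆ X ∪ Y := fun a ha => by
    by_contra h
    simp only [Finset.mem_union, not_or] at h
    exact Finsupp.mem_support_iff.mp ha
      (by simp [Finsupp.sub_apply, u_apply, h.1, h.2])
  rw [l1norm_eq_sum _ (X ∪ Y) hs]
  have : ∀ a ∈ X ∪ Y, |(u X - u Y) a| = if a ∈ X ∆ Y then (1:ℝ) else 0 := by
    intro a _
    by_cases hx : a ∈ X <;> by_cases hy : a ∈ Y <;>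
      simp [Finsupp.sub_apply, u_apply, hx, hy, Finset.mem_symmDiff]
  rw [Finset.sum_congr rfl this, Finset.sum_ite_mem,
    Finset.inter_eq_right.mpr (fun a ha => by
      rw [Finset.mem_symmDiff] at ha
      rcases ha with ⟨h,_⟩|⟨h,_⟩ <;> simp [Finset.mem_union, h])]
  simp

lemma diffuse_eq (μ : G →₀ ℝ) (f : A →₀ ℝ) :
    diffuse μ f = ∑ g ∈ μ.support, μ g • Finsupp.mapDomain (fun a => g • a) f := rfl

lemma diffuse_sum_single (μ : G →₀ ℝ) (s : Finset A) (c : A → ℝ) :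
    diffuse μ (∑ a ∈ s, Finsupp.single a (c a)) =
      ∑ a ∈ s, c a • Finsupp.mapDomain (fun g : G => g • a) μ := by
  rw [diffuse_eq]
  have h1 : ∀ g : G, Finsupp.mapDomain (fun a => g • a) (∑ a ∈ s, Finsupp.single a (c a))
      = ∑ a ∈ s, Finsupp.single (g • a) (c a) := fun g => by
    rw [Finsupp.mapDomain_finset_sum]
    exact Finset.sum_congr rfl fun a _ => Finsupp.mapDomain_single
  calc ∑ g ∈ μ.support, μ g • Finsupp.mapDomain (fun a => g • a) (∑ a ∈ s, Finsupp.single a (c a))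
      = ∑ g ∈ μ.support, ∑ a ∈ s, Finsupp.single (g • a) (μ g * c a) := by
        refine Finset.sum_congr rfl fun g _ => ?_
        rw [h1, Finset.smul_sum]
        exact Finset.sum_congr rfl fun a _ => Finsupp.smul_single' _ _ _
    _ = ∑ a ∈ s, ∑ g ∈ μ.support, Finsupp.single (g • a) (c a * μ g) := by
        rw [Finset.sum_comm]
        exact Finset.sum_congr rfl fun a _ => Finset.sum_congr rfl fun g _ => by rw [mul_comm]
    _ = ∑ a ∈ s, c a • Finsupp.mapDomain (fun g : G => g • a) μ := by
        refine Finset.sum_congr rfl fun a _ => ?_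
        rw [mapDomain_eq_sum, Finset.smul_sum]
        exact Finset.sum_congr rfl fun g _ => (Finsupp.smul_single' _ _ _).symm

end DiffProof

open Classical in
/-- Let `G` be an amenable group acting on a set `A`, let `f : A → ℝ` be
finitely supported, and let the orbits of the elements of `supp f` be represented by a finite
set `R` of pairwise distinct-orbit representatives covering `supp f`. Then for every `ε > 0`
there is a finitely supported probability measure `μ` on `G` with
`‖μ * f‖₁ ≤ ε + Σ_{r ∈ R} |Σ_{a ∈ orbit r} f(a)|`. -/
theorem diffusion_of_amenable_orbits (hG : Amenable G) (f : A →₀ ℝ)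
    (R : Finset A)
    (hcover : ∀ a ∈ f.support, ∃ r ∈ R, a ∈ MulAction.orbit G r)
    (hdistinct : ∀ r ∈ R, ∀ r' ∈ R, r ≠ r' → MulAction.orbit G r ≠ MulAction.orbit G r')
    (ε : ℝ) (hε : 0 < ε) :
    ∃ μ : G →₀ ℝ, (∀ g, 0 ≤ μ g) ∧ (∑ g ∈ μ.support, μ g = 1) ∧
      l1norm (diffuse μ f) ≤
        ε + ∑ r ∈ R, |∑ a ∈ f.support, if a ∈ MulAction.orbit G r then f a else 0| := by
  classical
  open DiffProof in
  choose! ρ hρR hρorb using hcover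
  have horb : ∀ a ∈ f.support, ∃ g : G, g • ρ a = a := fun a ha =>
    MulAction.mem_orbit_iff.mp (hρorb a ha)
  choose! σ hσ using horb
  set s0 := f.support with hs0
  set T : ℝ := ∑ a ∈ s0, |f a| with hTdef
  have hT : 0 ≤ T := Finset.sum_nonneg fun _ _ => abs_nonneg _
  set ε₀ : ℝ := ε / (T + 1) with hε₀def
  have hε₀ : 0 < ε₀ := div_pos hε (by linarith)
  obtain ⟨F, hFne, hF⟩ := hG ε₀ hε₀ (s0.image fun a => (σ a)⁻¹)
  have hFcard : (0:ℝ) < F.card := by exact_mod_cast Finset.card_pos.mpr hFne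
  set c : ℝ := (F.card : ℝ)⁻¹ with hcdef
  have hc : 0 < c := inv_pos.mpr hFcard
  set X : Finset G := F.image (fun x => x⁻¹) with hXdef
  set μ : G →₀ ℝ := c • DiffProof.u X with hμdef
  have hXcard : (X.card : ℝ) = F.card := by
    rw [hXdef, Finset.card_image_of_injective F inv_injective]
  have hμapply : ∀ g, μ g = if g ∈ X then c else 0 := fun g => by
    rw [hμdef]
    rw [Finsupp.smul_apply, DiffProof.u_apply]
    split <;> simp
  have hμnonneg : ∀ g, 0 ≤ μ g := fun g => by
    rw [hμapply]; split
    · exact hc.le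
    · exact le_refl _
  have hμl1 : l1norm μ = 1 := by
    rw [hμdef, DiffProof.l1norm_smul, DiffProof.l1norm_u, hXcard, abs_of_pos hc, hcdef]
    field_simp
  have hμsum : ∑ g ∈ μ.support, μ g = 1 := by
    rw [← hμl1, l1norm]
    exact Finset.sum_congr rfl fun g _ => (abs_of_nonneg (hμnonneg g)).symm
  refine ⟨μ, hμnonneg, hμsum, ?_⟩
  -- Følner estimate for right translations
  have hfolner : ∀ a ∈ s0, l1norm (Finsupp.mapDomain (fun h : G => h * σ a) μ - μ) ≤ ε₀ := by
    intro a ha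
    set g := σ a with hgdef
    have h1 : Finsupp.mapDomain (fun h : G => h * g) μ
        = c • DiffProof.u (X.image (fun h => h * g)) := by
      rw [hμdef, Finsupp.mapDomain_smul, DiffProof.mapDomain_u _ (mul_left_injective g)]
    have h2 : X.image (fun h => h * g) = (F.image fun x => g⁻¹ * x).image (fun x => x⁻¹) := by
      rw [hXdef, Finset.image_image, Finset.image_image]
      apply Finset.image_congr
      intro x _
      simp [mul_inv_rev]
    have h3 : Finsupp.mapDomain (fun h : G => h * g) μ - μ
        = c • (DiffProof.u ((F.image fun x => g⁻¹ * x).image (fun x => x⁻¹)) - DiffProof.u X) := by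
      rw [h1, h2, hμdef, smul_sub]
    rw [h3, DiffProof.l1norm_smul, abs_of_pos hc, DiffProof.l1norm_u_sub]
    have h4 : ((F.image fun x => g⁻¹ * x).image (fun x : G => x⁻¹)) ∆ X
        = (((F.image fun x => g⁻¹ * x)) ∆ F).image (fun x => x⁻¹) := by
      rw [hXdef, ← Finset.image_symmDiff _ _ inv_injective]
    rw [h4, Finset.card_image_of_injective _ inv_injective]
    have h5 := hF g⁻¹ (by
      rw [hgdef]
      exact Finset.mem_image_of_mem _ ha)
    calc c * (((F.image fun x => g⁻¹ * x) ∆ F).card : ℝ)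
        ≤ c * (ε₀ * F.card) := mul_le_mul_of_nonneg_left h5 hc.le
      _ = ε₀ := by rw [hcdef]; field_simp
  -- partition of the support by orbit representatives
  have hrepuniq : ∀ a ∈ s0, ∀ r ∈ R, (a ∈ MulAction.orbit G r ↔ ρ a = r) := by
    intro a ha r hr
    constructor
    · intro hor
      by_contra hne
      have e1 : MulAction.orbit G a = MulAction.orbit G r := MulAction.orbit_eq_iff.mpr hor
      have e2 : MulAction.orbit G a = MulAction.orbit G (ρ a) :=
        MulAction.orbit_eq_iff.mpr (hρorb a ha)
      exact hdistinct r hr (ρ a) (hρR a ha) (Ne.symm hne) (e1 ▸ e2)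
    · intro h
      exact h ▸ hρorb a ha
  have hfilter : ∀ r ∈ R, s0.filter (fun a => a ∈ MulAction.orbit G r)
      = s0.filter (fun a => ρ a = r) := by
    intro r hr
    exact Finset.filter_congr fun a ha => hrepuniq a ha r hr
  -- expand the diffusion
  have hfeq : f = ∑ a ∈ s0, Finsupp.single a (f a) := (Finsupp.sum_single f).symm
  have hdiff : diffuse μ f = ∑ r ∈ R, ∑ a ∈ s0.filter (fun a => ρ a = r),
      f a • Finsupp.mapDomain (fun g : G => g • a) μ := by
    conv_lhs => rw [hfeq]
    rw [DiffProof.diffuse_sum_single]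
    exact (Finset.sum_fiberwise_of_maps_to hρR _).symm
  -- per-orbit bound
  have hper : ∀ r ∈ R, l1norm (∑ a ∈ s0.filter (fun a => ρ a = r),
      f a • Finsupp.mapDomain (fun g : G => g • a) μ)
      ≤ |∑ a ∈ s0.filter (fun a => ρ a = r), f a|
        + ∑ a ∈ s0.filter (fun a => ρ a = r), |f a| * ε₀ := by
    intro r hr
    set t := s0.filter (fun a => ρ a = r) with htdef
    have hcomp : ∀ a ∈ t, (fun g : G => g • a)
        = (fun g : G => g • r) ∘ (fun g => g * σ a) := by
      intro a ha
      rw [htdef, Finset.mem_filter] at ha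
      have hra : σ a • r = a := by rw [← ha.2]; exact hσ a ha.1
      funext g
      simp [Function.comp, mul_smul, hra]
    have hstep : (∑ a ∈ t, f a • Finsupp.mapDomain (fun g : G => g • a) μ)
        = Finsupp.mapDomain (fun g : G => g • r)
            (∑ a ∈ t, f a • Finsupp.mapDomain (fun g : G => g * σ a) μ) := by
      rw [Finsupp.mapDomain_finset_sum]
      refine Finset.sum_congr rfl fun a ha => ?_
      rw [hcomp a ha, Finsupp.mapDomain_comp]
      exact (Finsupp.mapDomain_smul _ _).symm
    rw [hstep]
    refine (DiffProof.l1norm_mapDomain_le _ _).trans ?_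
    have hW : (∑ a ∈ t, f a • Finsupp.mapDomain (fun g : G => g * σ a) μ)
        = (∑ a ∈ t, f a) • μ
          + ∑ a ∈ t, f a • (Finsupp.mapDomain (fun g : G => g * σ a) μ - μ) := by
      rw [Finset.sum_smul, ← Finset.sum_add_distrib]
      refine Finset.sum_congr rfl fun a _ => ?_
      rw [smul_sub]
      abel
    rw [hW]
    refine (DiffProof.l1norm_add_le _ _).trans ?_
    have hA : l1norm ((∑ a ∈ t, f a) • μ) = |∑ a ∈ t, f a| := by
      rw [DiffProof.l1norm_smul, hμl1, mul_one]
    have hB : l1norm (∑ a ∈ t, f a • (Finsupp.mapDomain (fun g : G => g * σ a) μ - μ))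
        ≤ ∑ a ∈ t, |f a| * ε₀ := by
      refine (DiffProof.l1norm_sum_le _ _).trans (Finset.sum_le_sum fun a ha => ?_)
      rw [DiffProof.l1norm_smul]
      have ha0 : a ∈ s0 := (Finset.mem_filter.mp (htdef ▸ ha)).1
      exact mul_le_mul_of_nonneg_left (hfolner a ha0) (abs_nonneg _)
    linarith
  -- assemble
  have hsum1 : l1norm (diffuse μ f)
      ≤ ∑ r ∈ R, (|∑ a ∈ s0.filter (fun a => ρ a = r), f a|
        + ∑ a ∈ s0.filter (fun a => ρ a = r), |f a| * ε₀) := by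
    rw [hdiff]
    exact (DiffProof.l1norm_sum_le _ _).trans (Finset.sum_le_sum hper)
  have hsum2 : ∑ r ∈ R, ∑ a ∈ s0.filter (fun a => ρ a = r), |f a| * ε₀ = T * ε₀ := by
    rw [Finset.sum_fiberwise_of_maps_to hρR, hTdef, Finset.sum_mul]
  have hsum3 : T * ε₀ ≤ ε := by
    have h1 : ε₀ * (T + 1) = ε := by
      rw [hε₀def]; field_simp
    nlinarith
  have hrhs : ∀ r ∈ R, (∑ a ∈ f.support, if a ∈ MulAction.orbit G r then f a else 0)
      = ∑ a ∈ s0.filter (fun a => ρ a = r), f a := by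
    intro r hr
    rw [← hfilter r hr, Finset.sum_filter]
  calc l1norm (diffuse μ f)
      ≤ ∑ r ∈ R, |∑ a ∈ s0.filter (fun a => ρ a = r), f a|
        + ∑ r ∈ R, ∑ a ∈ s0.filter (fun a => ρ a = r), |f a| * ε₀ := by
        rw [← Finset.sum_add_distrib]; exact hsum1
    _ ≤ ∑ r ∈ R, |∑ a ∈ s0.filter (fun a => ρ a = r), f a| + ε := by
        rw [hsum2] at *
        linarith
    _ = ε + ∑ r ∈ R, |∑ a ∈ f.support, if a ∈ MulAction.orbit G r then f a else 0| := by
        rw [add_comm]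
        congr 1
        exact Finset.sum_congr rfl fun r hr => by rw [hrhs r hr]
end
end

section
/- With ∂_W defined as the partial boundary operator ∂_W τ = Σ_{i : τ(v_i) ∈ W} (−1)^i ∂_i τ on singular chains of a space, and ∂ the full boundary operator, one has the anticommutation relation ∂ ∘ ∂_W = − ∂_W ∘ ∂. (Equivalently, writing ∂ = ∂_W + ∂_{W^c} on each simplex, ∂_{W^c} ∂_W = − ∂_W ∂_{W^c}.) -/
noncomputable section

open scoped ENNReal

/-- The standard `k`-simplex, as a topological space. -/
abbrev Δ (k : ℕ) := {x : Fin (k + 1) → ℝ // x ∈ stdSimplex ℝ (Fin (k + 1))}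

/-- Singular `k`-simplices in `X`: continuous maps `Δ^k → X`. -/
abbrev SSimplex (X : Type*) [TopologicalSpace X] (k : ℕ) := C(Δ k, X)

/-- The affine embedding of `Δ^k` onto the `i`-th face of `Δ^{k+1}`. -/
def facePt {k : ℕ} (i : Fin (k + 2)) (x : Δ k) : Δ (k + 1) :=
  ⟨i.insertNth 0 x.1, by
    constructor
    · intro j
      refine i.succAboveCases ?_ ?_ j
      · simp
      · intro m
        simpa [Fin.insertNth_apply_succAbove] using x.2.1 m
    · rw [Fin.sum_univ_succAbove _ i]
      simpa [Fin.insertNth_apply_same, Fin.insertNth_apply_succAbove] using x.2.2⟩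

/-- The face embedding as a continuous map. -/
def faceC {k : ℕ} (i : Fin (k + 2)) : C(Δ k, Δ (k + 1)) :=
  ⟨facePt i, by
    apply Continuous.subtype_mk
    exact Continuous.finInsertNth i continuous_const (continuous_subtype_val)⟩

variable {X : Type*} [TopologicalSpace X]

/-- The `i`-th face of a singular simplex. -/
def face {k : ℕ} (i : Fin (k + 2)) (σ : SSimplex X (k + 1)) : SSimplex X k :=
  σ.comp (faceC i)

/-- The `i`-th vertex of the standard simplex. -/
def vtx {k : ℕ} (i : Fin (k + 1)) : Δ k :=
  ⟨fun j => if j = i then 1 else 0, by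
    constructor
    · intro j; dsimp only; split <;> norm_num
    · simp⟩

/-- Singular `k`-chains with real coefficients, as functions on singular simplices
(finiteness/local finiteness conditions are imposed separately). -/
abbrev Chain (X : Type*) [TopologicalSpace X] (k : ℕ) := SSimplex X k → ℝ

/-- A chain is an ordinary (finite) singular chain when it has finite support. -/
def FinSupp {k : ℕ} (c : Chain X k) : Prop := {σ | c σ ≠ 0}.Finite

open Classical in
/-- The boundary operator on chains. -/
def bdry {k : ℕ} (c : Chain X (k + 1)) : Chain X k :=
  fun τ => ∑ᶠ σ : SSimplex X (k + 1), ∑ i : Fin (k + 2),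
    if face i σ = τ then (-1 : ℝ) ^ (i : ℕ) * c σ else 0

/-- The ℓ¹-norm of a chain (with value in `ℝ≥0∞`). -/
def l1 {k : ℕ} (c : Chain X k) : ℝ≥0∞ := ∑' σ, ENNReal.ofReal |c σ|

open Classical in
/-- The indicator chain of a single singular simplex. -/
def single {k : ℕ} (σ : SSimplex X k) : Chain X k := fun τ => if τ = σ then 1 else 0

open Classical in
/-- Pushforward of a chain along a continuous map. -/
def push {Y : Type*} [TopologicalSpace Y] {k : ℕ} (g : C(X, Y)) (c : Chain X k) : Chain Y k :=
  fun τ => ∑ᶠ σ : SSimplex X k, if g.comp σ = τ then c σ else 0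

open Classical in
/-- The partial boundary operator `∂_W`: on a simplex `τ`,
`∂_W τ = Σ_{i : τ(v_i) ∈ W} (−1)^i ∂_i τ`, extended to chains.  Note that `∂ = ∂_{univ}` is
the full boundary operator. -/
def pbd (W : Set X) {k : ℕ} (c : Chain X (k + 1)) : Chain X k :=
  fun τ => ∑ᶠ σ : SSimplex X (k + 1), ∑ i : Fin (k + 2),
    if σ (vtx i) ∈ W ∧ face i σ = τ then (-1 : ℝ) ^ (i : ℕ) * c σ else 0

/-! Expanding simplex by simplex, `∂_V ∂_W σ` is a sum over ordered pairs `(i, j)` of face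
deletions with sign `(-1)^(i+j)`, where vertex `i` is tested against `W` and vertex
`i.succAbove j` against `V`. Deleting `i` and then `j` gives the same face as deleting
`i.succAbove j` and then `j.predAbove i`; this swap is an involution of the index pairs which
flips the sign and exchanges the two tested vertices, so it matches `∂_V ∂_W σ` term by term
with `-∂_W ∂_V σ`. -/

namespace Fin

theorem insertNth_insertNth_eq_swap {α : Type*} {n : ℕ} (i : Fin (n + 2)) (j : Fin (n + 1))
    (y z : α) (x : Fin n → α) :
    i.insertNth (α := fun _ ↦ α) y (j.insertNth (α := fun _ ↦ α) z x) =
      (i.succAbove j).insertNth (α := fun _ ↦ α) z ((j.predAbove i).insertNth y x) := by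
  have hi := succAbove_succAbove_predAbove i j
  funext m
  refine i.succAboveCases ?_ (fun r ↦ ?_) m
  · have h := insertNth_apply_succAbove (α := fun _ ↦ α) (i.succAbove j) z
      ((j.predAbove i).insertNth y x) (j.predAbove i)
    rw [hi, insertNth_apply_same] at h
    rw [insertNth_apply_same, h]
  · refine j.succAboveCases ?_ (fun t ↦ ?_) r
    · simp only [insertNth_apply_same, insertNth_apply_succAbove]
    · simp only [insertNth_apply_succAbove]
      rw [← succAbove_succAbove_succAbove_predAbove]
      simp only [insertNth_apply_succAbove]

end Fin

/-- The involution of ordered pairs of face indices exchanging the order of the two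
deletions. -/
def faceSwap {n : ℕ} (p : Fin (n + 2) × Fin (n + 1)) : Fin (n + 2) × Fin (n + 1) :=
  (p.1.succAbove p.2, p.2.predAbove p.1)

theorem faceSwap_fst {n : ℕ} (p : Fin (n + 2) × Fin (n + 1)) :
    (faceSwap p).1 = p.1.succAbove p.2 :=
  rfl

theorem succAbove_faceSwap {n : ℕ} (p : Fin (n + 2) × Fin (n + 1)) :
    (faceSwap p).1.succAbove (faceSwap p).2 = p.1 :=
  Fin.succAbove_succAbove_predAbove p.1 p.2

theorem faceSwap_involutive {n : ℕ} : Function.Involutive (faceSwap (n := n)) := fun p ↦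
  Prod.ext (succAbove_faceSwap p) (Fin.predAbove_predAbove_succAbove p.1 p.2)

theorem odd_add_faceSwap {n : ℕ} (p : Fin (n + 2) × Fin (n + 1)) :
    Odd ((p.1 : ℕ) + p.2 + ((faceSwap p).1 + (faceSwap p).2)) := by
  simp only [faceSwap, Fin.succAbove, Fin.predAbove, Fin.lt_def, apply_dite Fin.val,
    apply_ite Fin.val, Fin.val_castSucc, Fin.val_succ, Fin.val_pred, Fin.coe_castPred,
    dite_eq_ite]
  split_ifs <;> rw [Nat.odd_iff] <;> omega

theorem neg_one_pow_faceSwap {R : Type*} [Ring R] {n : ℕ} (p : Fin (n + 2) × Fin (n + 1)) :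
    (-1 : R) ^ (((faceSwap p).1 : ℕ) + (faceSwap p).2) = -(-1) ^ ((p.1 : ℕ) + p.2) := by
  set a := (p.1 : ℕ) + p.2
  calc (-1 : R) ^ (((faceSwap p).1 : ℕ) + (faceSwap p).2)
      = (-1) ^ (a + a) * (-1) ^ (((faceSwap p).1 : ℕ) + (faceSwap p).2) := by
        rw [Even.neg_one_pow ⟨a, rfl⟩, one_mul]
    _ = (-1) ^ a * (-1) ^ (a + (((faceSwap p).1 : ℕ) + (faceSwap p).2)) := by
        rw [pow_add _ a a, pow_add _ a, mul_assoc]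
    _ = -(-1) ^ a := by rw [(odd_add_faceSwap p).neg_one_pow, mul_neg_one]

theorem facePt_vtx {k : ℕ} (i : Fin (k + 2)) (j : Fin (k + 1)) :
    facePt i (vtx j) = vtx (i.succAbove j) := by
  apply Subtype.ext
  funext m
  refine i.succAboveCases ?_ (fun r ↦ ?_) m
  · simp [facePt, vtx, (Fin.succAbove_ne i j).symm]
  · simp [facePt, vtx, Fin.succAbove_right_injective.eq_iff]

theorem face_vtx {k : ℕ} (i : Fin (k + 2)) (σ : SSimplex X (k + 1)) (j : Fin (k + 1)) :
    face i σ (vtx j) = σ (vtx (i.succAbove j)) :=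
  congrArg σ (facePt_vtx i j)

theorem face_face_faceSwap {k : ℕ} (σ : SSimplex X (k + 2)) (p : Fin (k + 3) × Fin (k + 2)) :
    face (faceSwap p).2 (face (faceSwap p).1 σ) = face p.2 (face p.1 σ) := by
  ext x
  exact congrArg σ (Subtype.ext (Fin.insertNth_insertNth_eq_swap p.1 p.2 0 0 x.1).symm)

theorem finsum_finsum_mul_assoc {α β R : Type*} [Semiring R] {c : α → R}
    (hc : c.support.Finite) (A : α → β → R) (hA : ∀ a, (A a).support.Finite) (B : β → R) :
    ∑ᶠ b, (∑ᶠ a, c a * A a b) * B b = ∑ᶠ a, c a * ∑ᶠ b, A a b * B b := by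
  have hsupp (f : α → R) : (fun a ↦ c a * f a).support ⊆ hc.toFinset := by
    simpa using Function.support_mul_subset_left c f
  have hrow (a : α) : (fun b ↦ A a b * B b).support.Finite :=
    (hA a).subset (Function.support_mul_subset_left _ _)
  calc ∑ᶠ b, (∑ᶠ a, c a * A a b) * B b
      = ∑ᶠ b, ∑ a ∈ hc.toFinset, c a * (A a b * B b) := by
        simp_rw [finsum_eq_sum_of_support_subset _ (hsupp _), Finset.sum_mul, mul_assoc]
    _ = ∑ a ∈ hc.toFinset, ∑ᶠ b, c a * (A a b * B b) :=
        finsum_sum_comm _ _ fun a _ ↦ (hrow a).subset (Function.support_mul_subset_right _ _)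
    _ = ∑ᶠ a, c a * ∑ᶠ b, A a b * B b := by
        simp_rw [← mul_finsum' _ _ (hrow _)]
        exact (finsum_eq_sum_of_support_subset _ (hsupp _)).symm

open Classical in
/-- The coefficient of `τ` in `∂_W σ`. -/
def pbdCoeff (W : Set X) {k : ℕ} (σ : SSimplex X (k + 1)) (τ : SSimplex X k) : ℝ :=
  ∑ i : Fin (k + 2), if σ (vtx i) ∈ W ∧ face i σ = τ then (-1 : ℝ) ^ (i : ℕ) else 0

theorem pbd_apply (W : Set X) {k : ℕ} (c : Chain X (k + 1)) (τ : SSimplex X k) :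
    pbd W c τ = ∑ᶠ σ, c σ * pbdCoeff W σ τ := by
  simp only [pbd, pbdCoeff, mul_comm (c _), Finset.sum_mul, ite_mul, zero_mul]

open Classical in
theorem finite_support_pbdCoeff (W : Set X) {k : ℕ} (σ : SSimplex X (k + 1)) :
    (pbdCoeff W σ).support.Finite := by
  refine (Set.finite_range fun i ↦ face i σ).subset fun τ hτ ↦ ?_
  obtain ⟨i, -, hi⟩ := Finset.exists_ne_zero_of_sum_ne_zero hτ
  exact ⟨i, (ite_ne_right_iff.mp hi).1.2⟩

theorem pbd_pbd_apply (V W : Set X) {k : ℕ} {c : Chain X (k + 2)} (hc : FinSupp c)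
    (τ : SSimplex X k) :
    pbd V (pbd W c) τ = ∑ᶠ σ, c σ * ∑ᶠ ρ, pbdCoeff W σ ρ * pbdCoeff V ρ τ := by
  simp only [pbd_apply]
  exact finsum_finsum_mul_assoc hc _ (finite_support_pbdCoeff W) _

open Classical in
theorem finsum_pbdCoeff_mul_pbdCoeff (V W : Set X) {k : ℕ} (σ : SSimplex X (k + 2))
    (τ : SSimplex X k) :
    ∑ᶠ ρ, pbdCoeff W σ ρ * pbdCoeff V ρ τ =
      ∑ p : Fin (k + 3) × Fin (k + 2),
        if σ (vtx p.1) ∈ W ∧ σ (vtx (p.1.succAbove p.2)) ∈ V ∧ face p.2 (face p.1 σ) = τ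
        then (-1 : ℝ) ^ ((p.1 : ℕ) + p.2) else 0 := by
  have hcollapse (i : Fin (k + 3)) :
      ∑ᶠ ρ, (if σ (vtx i) ∈ W ∧ face i σ = ρ then (-1 : ℝ) ^ (i : ℕ) * pbdCoeff V ρ τ else 0) =
        if σ (vtx i) ∈ W then (-1 : ℝ) ^ (i : ℕ) * pbdCoeff V (face i σ) τ else 0 := by
    rw [finsum_eq_single _ (face i σ) fun ρ hρ ↦ if_neg fun h ↦ hρ h.2.symm]
    simp only [and_true]
  calc ∑ᶠ ρ, pbdCoeff W σ ρ * pbdCoeff V ρ τ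
      = ∑ i, ∑ᶠ ρ,
          (if σ (vtx i) ∈ W ∧ face i σ = ρ then (-1 : ℝ) ^ (i : ℕ) * pbdCoeff V ρ τ else 0) := by
        simp only [pbdCoeff, Finset.sum_mul, ite_mul, zero_mul]
        exact finsum_sum_comm _ _ fun i _ ↦ (Set.finite_singleton (face i σ)).subset
          fun ρ hρ ↦ (ite_ne_right_iff.mp hρ).1.2.symm
    _ = _ := by
        simp only [hcollapse, Fintype.sum_prod_type]
        refine Finset.sum_congr rfl fun i _ ↦ ?_
        split_ifs with hi
        · simp only [pbdCoeff, face_vtx, Finset.mul_sum, hi, true_and, mul_ite, mul_zero, pow_add]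
        · simp only [hi, false_and, if_false, Finset.sum_const_zero]

theorem finsum_pbdCoeff_mul_pbdCoeff_anticomm (V W : Set X) {k : ℕ} (σ : SSimplex X (k + 2))
    (τ : SSimplex X k) :
    ∑ᶠ ρ, pbdCoeff W σ ρ * pbdCoeff V ρ τ = -∑ᶠ ρ, pbdCoeff V σ ρ * pbdCoeff W ρ τ := by
  rw [finsum_pbdCoeff_mul_pbdCoeff, finsum_pbdCoeff_mul_pbdCoeff, ← Finset.sum_neg_distrib]
  refine Fintype.sum_bijective faceSwap faceSwap_involutive.bijective _ _ fun p ↦ ?_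
  rw [face_face_faceSwap, neg_one_pow_faceSwap, succAbove_faceSwap, faceSwap_fst]
  split_ifs <;> grind

theorem pbd_pbd_anticomm (V W : Set X) {k : ℕ} {c : Chain X (k + 2)} (hc : FinSupp c) :
    pbd V (pbd W c) = -pbd W (pbd V c) := by
  funext τ
  simp only [Pi.neg_apply, pbd_pbd_apply V W hc, pbd_pbd_apply W V hc,
    finsum_pbdCoeff_mul_pbdCoeff_anticomm V W, mul_neg, finsum_neg_distrib]

/-- The full boundary operator `∂ = ∂_{univ}` anticommutes with the partial
boundary operator: `∂ ∘ ∂_W = − ∂_W ∘ ∂`. -/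
theorem bdry_pbd_anticomm {X : Type*} [TopologicalSpace X] (W : Set X) {k : ℕ}
    (c : Chain X (k + 2)) (hc : FinSupp c) :
    pbd Set.univ (pbd W c) = - pbd W (pbd Set.univ c) :=
  pbd_pbd_anticomm Set.univ W hc
end
end

section
/- Color the vertices of the first barycentric subdivision S(Δ^k) of the standard k-simplex by a 'selection coloring': each vertex of S(Δ^k), being the barycenter of a face F of Δ^k, receives the color of some vertex of F. If the k+1 vertices of Δ^k all have distinct colors, then exactly one k-simplex of the barycentric subdivision S(Δ^k) has all its k+1 vertices of pairwise distinct colors. -/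
/-- Colour the vertices of the first barycentric subdivision of `Δ^k`
(i.e. the nonempty faces `F ⊆ Fin (k+1)`, the barycenter of `F` receiving the colour of one of
the vertices of `F`).  If the `k+1` original vertices all have distinct colours, then exactly
one top-dimensional simplex of the barycentric subdivision (i.e. exactly one maximal ascending
chain `F 0 ⊊ F 1 ⊊ ... ⊊ F k` of faces, encoded by `(F i).card = i + 1` and monotonicity) has
all of its `k+1` vertices of pairwise distinct colours. -/
theorem barycentric_unique_rainbow_simplex {C : Type*} (k : ℕ)
    (col0 : Fin (k + 1) → C) (col : Finset (Fin (k + 1)) → C)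
    (hsel : ∀ F : Finset (Fin (k + 1)), F.Nonempty → ∃ v ∈ F, col F = col0 v)
    (hinj : Function.Injective col0) :
    ∃! F : Fin (k + 1) → Finset (Fin (k + 1)),
      (∀ i : Fin (k + 1), (F i).card = (i : ℕ) + 1) ∧
      (∀ i j : Fin (k + 1), i ≤ j → F i ⊆ F j) ∧
      Function.Injective fun i => col (F i) := by
  classical
  -- a total selection function
  have hsel' : ∀ F : Finset (Fin (k+1)), ∃ v, F.Nonempty → v ∈ F ∧ col F = col0 v := by
    intro F
    by_cases h : F.Nonempty
    · obtain ⟨v, hv, hc⟩ := hsel F h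
      exact ⟨v, fun _ => ⟨hv, hc⟩⟩
    · exact ⟨0, fun h' => absurd h' h⟩
  choose s hs using hsel'
  have hsmem : ∀ F, F.Nonempty → s F ∈ F := fun F h => (hs F h).1
  have hscol : ∀ F, F.Nonempty → col F = col0 (s F) := fun F h => (hs F h).2
  -- the canonical descending chain
  set D : ℕ → Finset (Fin (k+1)) :=
    fun j => Nat.rec Finset.univ (fun _ Dj => Dj.erase (s Dj)) j with hD
  have hDsucc : ∀ j, D (j+1) = (D j).erase (s (D j)) := fun j => rfl
  have hDcard : ∀ j, j ≤ k + 1 → (D j).card = k + 1 - j := by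
    intro j hj
    induction j with
    | zero => simp [hD]
    | succ n ih =>
      have hn : n ≤ k + 1 := by omega
      have hc := ih hn
      have hne : (D n).Nonempty := by
        rw [← Finset.card_pos, hc]; omega
      rw [hDsucc, Finset.card_erase_of_mem (hsmem _ hne), hc]
      omega
  have hDanti : ∀ a b : ℕ, a ≤ b → D b ⊆ D a := by
    intro a b hab
    induction b with
    | zero =>
      have : a = 0 := Nat.le_zero.mp hab
      subst this; exact subset_rfl
    | succ n ih =>
      rcases Nat.lt_or_ge a (n+1) with h | h
      · exact (hDsucc n ▸ Finset.erase_subset _ _).trans (ih (by omega))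
      · have : a = n + 1 := by omega
        subst this; exact subset_rfl
  have hDnot : ∀ j, s (D j) ∉ D (j+1) := by
    intro j; rw [hDsucc]; exact Finset.notMem_erase _ _
  have hDne : ∀ j, j ≤ k → (D j).Nonempty := by
    intro j hj
    rw [← Finset.card_pos, hDcard j (by omega)]; omega
  -- existence
  refine ⟨fun i => D (k - (i : ℕ)), ⟨?_, ?_, ?_⟩, ?_⟩
  · intro i
    have := i.isLt
    rw [hDcard _ (by omega)]; omega
  · intro i j hij
    have hij' : (i : ℕ) ≤ (j : ℕ) := hij
    exact hDanti _ _ (by omega)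
  · intro i j hcolij
    simp only at hcolij
    have hi := i.isLt
    have hj := j.isLt
    have hnei : (D (k - (i : ℕ))).Nonempty := hDne _ (by omega)
    have hnej : (D (k - (j : ℕ))).Nonempty := hDne _ (by omega)
    rw [hscol _ hnei, hscol _ hnej] at hcolij
    have hss := hinj hcolij
    by_contra hne
    have key : ∀ a b : Fin (k+1), a < b → s (D (k - (a : ℕ))) ≠ s (D (k - (b : ℕ))) := by
      intro a b hab heq
      have ha := a.isLt
      have hb := b.isLt
      have h1 : s (D (k - (b : ℕ))) ∉ D (k - (b : ℕ) + 1) := hDnot _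
      have h2 : D (k - (a : ℕ)) ⊆ D (k - (b : ℕ) + 1) := by
        have hab' : (a : ℕ) < (b : ℕ) := hab
        exact hDanti (k - (b : ℕ) + 1) (k - (a : ℕ)) (by omega)
      have h3 : s (D (k - (a : ℕ))) ∈ D (k - (a : ℕ)) := hsmem _ (hDne _ (by omega))
      exact h1 (heq ▸ h2 h3)
    rcases lt_trichotomy i j with h | h | h
    · exact key i j h hss
    · exact hne h
    · exact key j i h hss.symm
  -- uniqueness
  · intro G ⟨hGcard, hGmono, hGinj⟩
    have hGne : ∀ i : Fin (k+1), (G i).Nonempty := by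
      intro i; rw [← Finset.card_pos, hGcard]; omega
    -- the selected vertices of a rainbow chain are pairwise distinct
    have htinj : Function.Injective fun i => s (G i) := by
      intro i j hij
      apply hGinj
      simp only
      rw [hscol _ (hGne i), hscol _ (hGne j)]
      simpa using congrArg col0 hij
    -- each G i is exactly the set of selected vertices of its initial segment
    have hGimg : ∀ i : Fin (k+1), G i = (Finset.Iic i).image (fun j => s (G j)) := by
      intro i
      have hsub : (Finset.Iic i).image (fun j => s (G j)) ⊆ G i := by
        intro x hx
        obtain ⟨j, hj, rfl⟩ := Finset.mem_image.mp hx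
        exact hGmono j i (Finset.mem_Iic.mp hj) (hsmem _ (hGne j))
      have hcard : ((Finset.Iic i).image (fun j => s (G j))).card = (i : ℕ) + 1 := by
        rw [Finset.card_image_of_injective _ htinj, Fin.card_Iic]
      exact (Finset.eq_of_subset_of_card_le hsub (by rw [hGcard, hcard])).symm
    have main : ∀ m : ℕ, (hm : m ≤ k) → G ⟨k - m, by omega⟩ = D m := by
      intro m
      induction m with
      | zero =>
        intro _
        have : (G ⟨k - 0, by omega⟩).card = k + 1 := by
          rw [hGcard]; simp
        have huniv := Finset.eq_univ_of_card _ (this.trans (Fintype.card_fin (k+1)).symm)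
        simpa [hD] using huniv
      | succ n ih =>
        intro hm
        have hn : n ≤ k := by omega
        have hb := ih hn
        set b : Fin (k+1) := ⟨k - n, by omega⟩ with hbdef
        set a : Fin (k+1) := ⟨k - (n+1), by omega⟩ with hadef
        have hab : a < b := by
          simp only [hadef, hbdef, Fin.lt_def]; omega
        have hsub : G a ⊆ (G b).erase (s (G b)) := by
          intro x hx
          refine Finset.mem_erase.mpr ⟨?_, hGmono a b hab.le hx⟩
          intro hxe
          rw [hGimg a] at hx
          obtain ⟨j, hj, hjx⟩ := Finset.mem_image.mp hx
          have : j = b := htinj (hjx.trans hxe)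
          subst this
          exact absurd (Finset.mem_Iic.mp hj) (not_le.mpr hab)
        have hcards : ((G b).erase (s (G b))).card ≤ (G a).card := by
          rw [Finset.card_erase_of_mem (hsmem _ (hGne b)), hGcard, hGcard]
          simp only [hadef, hbdef]
          omega
        have : G a = (G b).erase (s (G b)) :=
          Finset.eq_of_subset_of_card_le hsub hcards
        rw [hDsucc, ← hb, ← this]
    funext i
    have hi := i.isLt
    have h1 := main (k - (i : ℕ)) (by omega)
    have h2 : (⟨k - (k - (i : ℕ)), by omega⟩ : Fin (k+1)) = i := Fin.ext (by simp; omega)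
    rw [h2] at h1
    exact h1
end
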